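/- Let X~ in R^{n x d} have full row rank with minimum singular value sigma_min > 0, let u in R^d, b = (-X~ u)_+, and suppose w~ minimizes (1/2)||(b - X~ w)_+||_2^2 + rho ||w||_2 for rho >= 0. Then the constraint violations of w~ and v~ = u + w~ satisfy ||(X~ w~)_-||_2 <= rho / sigma_min and ||(X~ v~)_-||_2 <= rho / sigma_min, where (z)_- denotes the componentwise negative part. -/

import Mathlib

/-! The residual `r = (b - X̃ w̃)₊` dominates both constraint violations componentwise, because
`b ≥ 0` and `b ≥ -X̃ u`. Moving from `w̃` in the direction `g = X̃ᵀ r` decreases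
`½‖(b - X̃ w)₊‖²` at rate `‖g‖²` (this function is `1`-smooth with gradient `-X̃ᵀ r`), while
the penalty grows at rate at most `ρ‖g‖`; minimality of `w̃` therefore forces `‖g‖ ≤ ρ`, and full
row rank turns this into `σ‖r‖ ≤ ρ`. -/

open Matrix

/-- Euclidean norm on `Fin k → ℝ`. -/
noncomputable def norm2 {k : ℕ} (v : Fin k → ℝ) : ℝ := Real.sqrt (∑ i, v i ^ 2)

open Filter Topology

lemma norm2_sq {k : ℕ} (v : Fin k → ℝ) : norm2 v ^ 2 = ∑ i, v i ^ 2 :=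
  Real.sq_sqrt (Finset.sum_nonneg fun _ _ => sq_nonneg _)

lemma norm2_eq_norm_toLp {k : ℕ} (v : Fin k → ℝ) : norm2 v = ‖WithLp.toLp 2 v‖ := by
  simp [EuclideanSpace.norm_eq, norm2]

lemma norm2_le_norm2 {k : ℕ} {v w : Fin k → ℝ} (hv : 0 ≤ v) (hvw : v ≤ w) :
    norm2 v ≤ norm2 w :=
  Real.sqrt_le_sqrt (Finset.sum_le_sum fun i _ => pow_le_pow_left₀ (hv i) (hvw i) 2)

theorem le_mul_norm_of_minimizes_add_mul_norm {E : Type*} [SeminormedAddCommGroup E]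
    [NormedSpace ℝ E] {h : E → ℝ} {w v : E} {ρ a K : ℝ} (hρ : 0 ≤ ρ)
    (hmin : ∀ x, h w + ρ * ‖w‖ ≤ h x + ρ * ‖x‖)
    (hdesc : ∀ t > 0, h (w + t • v) ≤ h w - t * a + t ^ 2 * K) :
    a ≤ ρ * ‖v‖ := by
  have hle : ∀ t > 0, a ≤ ρ * ‖v‖ + t * K := by
    intro t ht
    have hnorm : ‖w + t • v‖ ≤ ‖w‖ + t * ‖v‖ := by
      simpa [norm_smul, abs_of_pos ht] using norm_add_le w (t • v)
    have : t * a ≤ t * (ρ * ‖v‖ + t * K) := by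
      nlinarith [hmin (w + t • v), hdesc t ht, mul_le_mul_of_nonneg_left hnorm hρ]
    exact le_of_mul_le_mul_left this ht
  have hlim : Tendsto (fun t => ρ * ‖v‖ + t * K) (𝓝[>] 0) (𝓝 (ρ * ‖v‖)) :=
    (Continuous.tendsto' (by fun_prop) 0 _ (by simp)).mono_left nhdsWithin_le_nhds
  exact ge_of_tendsto hlim (eventually_nhdsWithin_of_forall hle)

lemma sq_max_sub_le (z δ : ℝ) :
    max (z - δ) 0 ^ 2 ≤ max z 0 ^ 2 - 2 * δ * max z 0 + δ ^ 2 := by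
  rcases le_total (z - δ) 0 with h1 | h1 <;> rcases le_total z 0 with h2 | h2 <;>
    simp [h1, h2] <;> nlinarith

lemma sq_norm2_posPart_sub_le {k : ℕ} (p δ : Fin k → ℝ) :
    norm2 (fun i => max (p i - δ i) 0) ^ 2 ≤
      norm2 (fun i => max (p i) 0) ^ 2 - 2 * (δ ⬝ᵥ fun i => max (p i) 0) + norm2 δ ^ 2 := by
  rw [norm2_sq, norm2_sq, norm2_sq, dotProduct, Finset.mul_sum, ← Finset.sum_sub_distrib,
    ← Finset.sum_add_distrib]
  exact Finset.sum_le_sum fun i _ => by linarith [sq_max_sub_le (p i) (δ i)]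

theorem norm2_transpose_mulVec_posPart_le {n d : ℕ} (X : Matrix (Fin n) (Fin d) ℝ)
    (b : Fin n → ℝ) {ρ : ℝ} (hρ : 0 ≤ ρ) {w : Fin d → ℝ}
    (hmin : ∀ x : Fin d → ℝ,
      1 / 2 * norm2 (fun i => max (b i - (X *ᵥ w) i) 0) ^ 2 + ρ * norm2 w ≤
        1 / 2 * norm2 (fun i => max (b i - (X *ᵥ x) i) 0) ^ 2 + ρ * norm2 x) :
    norm2 (Xᵀ *ᵥ fun i => max (b i - (X *ᵥ w) i) 0) ≤ ρ := by
  set r : Fin n → ℝ := fun i => max (b i - (X *ᵥ w) i) 0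
  set g := Xᵀ *ᵥ r
  -- On `EuclideanSpace` the ambient norm is `norm2`, whereas `Fin d → ℝ` carries the sup norm.
  let h : EuclideanSpace ℝ (Fin d) → ℝ :=
    fun x => 1 / 2 * norm2 (fun i => max (b i - (X *ᵥ x.ofLp) i) 0) ^ 2
  have hdesc : ∀ t > 0, h (WithLp.toLp 2 w + t • WithLp.toLp 2 g) ≤
      h (WithLp.toLp 2 w) - t * norm2 g ^ 2 + t ^ 2 * (norm2 (X *ᵥ g) ^ 2 / 2) := by
    intro t _
    have hstep := sq_norm2_posPart_sub_le (fun i => b i - (X *ᵥ w) i) (t • X *ᵥ g)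
    have hrate : (t • X *ᵥ g) ⬝ᵥ r = t * norm2 g ^ 2 := by
      rw [smul_dotProduct, ← vecMul_transpose, ← dotProduct_mulVec, norm2_sq]
      simp [dotProduct, sq, g]
    have hsmul : norm2 (t • X *ᵥ g) ^ 2 = t ^ 2 * norm2 (X *ᵥ g) ^ 2 := by
      simp [norm2_sq, mul_pow, Finset.mul_sum]
    simp only [h, WithLp.ofLp_add, WithLp.ofLp_smul, mulVec_add, mulVec_smul, Pi.add_apply,
      ← sub_sub] at hstep ⊢
    rw [hrate, hsmul] at hstep
    linarith
  have hgrad := le_mul_norm_of_minimizes_add_mul_norm hρ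
    (fun x => by simpa [h, norm2_eq_norm_toLp] using hmin x.ofLp) hdesc
  rw [norm2_eq_norm_toLp g] at hgrad ⊢
  nlinarith [norm_nonneg (WithLp.toLp 2 g)]

/-- Approximate cone decomposition bound: if `X̃` has full row rank with minimum singular
value at least `σ > 0`, and `w̃` minimizes `(1/2)‖(b - X̃w)₊‖² + ρ‖w‖₂` with
`b = (-X̃u)₊`, then the constraint violations of `w̃` and `ṽ = u + w̃` satisfy
`‖(X̃w̃)₋‖₂ ≤ ρ/σ` and `‖(X̃ṽ)₋‖₂ ≤ ρ/σ`. -/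
theorem approximate_cone_decomposition_bound {n d : ℕ} (Xt : Matrix (Fin n) (Fin d) ℝ)
    (σ : ℝ) (hσ : 0 < σ)
    (hfull : ∀ z : Fin n → ℝ, σ * norm2 z ≤ norm2 (Xtᵀ.mulVec z))
    (u : Fin d → ℝ) (b : Fin n → ℝ) (hb : ∀ i, b i = max (-(Xt.mulVec u i)) 0)
    (ρ : ℝ) (hρ : 0 ≤ ρ)
    (wt : Fin d → ℝ)
    (hmin : ∀ w : Fin d → ℝ,
      1 / 2 * norm2 (fun i => max (b i - Xt.mulVec wt i) 0) ^ 2 + ρ * norm2 wt ≤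
        1 / 2 * norm2 (fun i => max (b i - Xt.mulVec w i) 0) ^ 2 + ρ * norm2 w) :
    norm2 (fun i => max (-(Xt.mulVec wt i)) 0) ≤ ρ / σ ∧
    norm2 (fun i => max (-(Xt.mulVec (u + wt) i)) 0) ≤ ρ / σ := by
  have hr : norm2 (fun i => max (b i - Xt.mulVec wt i) 0) ≤ ρ / σ := by
    rw [le_div_iff₀' hσ]
    exact (hfull _).trans (norm2_transpose_mulVec_posPart_le Xt b hρ hmin)
  have hpos : ∀ z : Fin n → ℝ, 0 ≤ fun i => max (z i) 0 := fun z i => le_max_right _ _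
  refine ⟨(norm2_le_norm2 (hpos _) fun i => ?_).trans hr,
    (norm2_le_norm2 (hpos _) fun i => ?_).trans hr⟩
  · exact max_le_max (by linarith [hb i, le_max_right (-(Xt *ᵥ u) i) 0]) le_rfl
  · rw [mulVec_add, Pi.add_apply]
    exact max_le_max (by linarith [hb i, le_max_left (-(Xt *ᵥ u) i) 0]) le_rfl
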